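/- L(Q'/Q) = Q'/Q - (11/5)·Q^2·Q' on ℝ, and consequently (L(Q'/Q))' = -(36/5)·Q^3 + (99/25)·Q^6. -/

import Mathlib

noncomputable def Q : ℝ → ℝ := fun x => (5/2 : ℝ) ^ ((1:ℝ)/3) * (Real.cosh (3*x/2)) ^ (-(2:ℝ)/3)

noncomputable def L (f : ℝ → ℝ) : ℝ → ℝ := fun x => -(deriv (deriv f)) x + f x - 4 * (Q x)^3 * f x

/-!
The log-derivative `f = Q'/Q` equals `-tanh (3x/2)`, and `Q³ = (5/2) sech² (3x/2)`. Hence `f` obeys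
`f' = -(3/5) Q³` and `f² = 1 - (2/5) Q³` (the ODE and the first integral of `Q`, divided by `Q²`).
With `Q' = f Q` this gives `f'' = -(9/5) Q³ f`, so `L f = f (1 - (11/5) Q³)`, and after differentiating once
more, the two relations turn `(L f)'` into a polynomial in `Q³`.
-/

open Real

theorem Real.hasDerivAt_tanh (x : ℝ) : HasDerivAt tanh (1 / cosh x ^ 2) x := by
  rw [show tanh = fun y => sinh y / cosh y from funext tanh_eq_sinh_div_cosh]
  refine ((hasDerivAt_sinh x).div (hasDerivAt_cosh x) (cosh_pos x).ne').congr_deriv ?_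
  rw [← cosh_sq_sub_sinh_sq x]
  ring

lemma hasDerivAt_three_mul_div_two (x : ℝ) : HasDerivAt (fun y : ℝ => 3 * y / 2) (3 / 2) x := by
  simpa using ((hasDerivAt_id x).const_mul 3).div_const 2

lemma Q_pos (x : ℝ) : 0 < Q x := by
  unfold Q
  positivity

lemma Q_pow_three (x : ℝ) : Q x ^ 3 = 5 / 2 / cosh (3 * x / 2) ^ 2 := by
  have hc := cosh_pos (3 * x / 2)
  rw [Q, mul_pow, ← rpow_natCast, ← rpow_natCast, ← rpow_mul (by norm_num), ← rpow_mul hc.le]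
  norm_num
  rfl

lemma hasDerivAt_Q (x : ℝ) : HasDerivAt Q (-tanh (3 * x / 2) * Q x) x := by
  have hc := cosh_pos (3 * x / 2)
  refine ((((hasDerivAt_cosh _).comp x (hasDerivAt_three_mul_div_two x)).rpow_const (p := -(2:ℝ)/3)
    (Or.inl hc.ne')).const_mul ((5/2 : ℝ) ^ ((1:ℝ)/3))).congr_deriv ?_
  rw [Function.comp_apply, rpow_sub hc, rpow_one, Q, tanh_eq_sinh_div_cosh]
  field_simp

lemma logDeriv_Q : logDeriv Q = fun x => -tanh (3 * x / 2) := by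
  funext x
  rw [logDeriv_apply, (hasDerivAt_Q x).deriv, mul_div_cancel_right₀ _ (Q_pos x).ne']

lemma deriv_Q (x : ℝ) : deriv Q x = logDeriv Q x * Q x := by
  rw [(hasDerivAt_Q x).deriv, logDeriv_Q]

lemma logDeriv_Q_sq (x : ℝ) : logDeriv Q x ^ 2 = 1 - 2 / 5 * Q x ^ 3 := by
  have hc := cosh_pos (3 * x / 2)
  rw [logDeriv_Q, Q_pow_three, neg_sq, tanh_eq_sinh_div_cosh]
  field_simp
  linear_combination -cosh_sq_sub_sinh_sq (3 * x / 2)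

lemma hasDerivAt_logDeriv_Q (x : ℝ) : HasDerivAt (logDeriv Q) (-(3 / 5) * Q x ^ 3) x := by
  rw [logDeriv_Q, Q_pow_three]
  refine ((hasDerivAt_tanh _).comp x (hasDerivAt_three_mul_div_two x)).neg.congr_deriv ?_
  ring

lemma hasDerivAt_Q_pow_three (x : ℝ) :
    HasDerivAt (fun y => Q y ^ 3) (3 * Q x ^ 3 * logDeriv Q x) x := by
  refine ((hasDerivAt_Q x).pow 3).congr_deriv ?_
  rw [logDeriv_Q]
  ring

lemma L_logDeriv_Q : L (logDeriv Q) = fun x => logDeriv Q x * (1 - 11 / 5 * Q x ^ 3) := by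
  funext x
  have hd : deriv (logDeriv Q) = fun y => -(3 / 5) * Q y ^ 3 :=
    funext fun y => (hasDerivAt_logDeriv_Q y).deriv
  rw [L, hd, ((hasDerivAt_Q_pow_three x).const_mul _).deriv]
  ring

theorem L_logderiv_Q :
    (∀ x : ℝ, L (fun y => deriv Q y / Q y) x = deriv Q x / Q x - (11/5) * (Q x)^2 * deriv Q x) ∧
    (∀ x : ℝ, deriv (L (fun y => deriv Q y / Q y)) x = -(36/5) * (Q x)^3 + (99/25) * (Q x)^6) := by
  change (∀ x, L (logDeriv Q) x = logDeriv Q x - _) ∧ ∀ x, deriv (L (logDeriv Q)) x = _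
  rw [L_logDeriv_Q]
  refine ⟨fun x => ?_, fun x => ?_⟩
  · rw [deriv_Q]
    ring
  · have h := (hasDerivAt_logDeriv_Q x).fun_mul
      ((hasDerivAt_const x 1).fun_sub ((hasDerivAt_Q_pow_three x).const_mul (11 / 5)))
    rw [h.deriv]
    linear_combination (-(33 / 5) * Q x ^ 3) * logDeriv_Q_sq x
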